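/- Let a be a homogeneous element of an MDG R-algebra A and x a homogeneous element of an MDG A-module X. If |a| is even then [a,x,a] = 0, and if |a| is odd then [a,x,a] = (-1)^{|x|}·2·[a,a,x]. In particular, if [a,a,x] = 0 then [a,x,a] = 0, and the converse holds when |a| is odd and 2 is invertible (or more generally char R ≠ 2). -/

import Mathlib

/-- `(-1)^n` as an integer, for `n : ℤ`. -/
def sgn (n : ℤ) : ℤ := ((Int.negOnePow n : ℤˣ) : ℤ)

/-- An MDG `R`-algebra: a ℤ-graded `R`-complex `M` centered data, with a chain-map
multiplication which is unital and strictly graded-commutative, but not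
necessarily associative. -/
structure MDGAlg (R : Type*) (M : Type*) [CommRing R] [AddCommGroup M] [Module R M] where
  grading : ℤ → Submodule R M
  internal : DirectSum.IsInternal grading
  mul : M →ₗ[R] M →ₗ[R] M
  d : M →ₗ[R] M
  one : M
  one_mem : one ∈ grading 0
  mul_mem : ∀ {i j : ℤ} {a b : M}, a ∈ grading i → b ∈ grading j → mul a b ∈ grading (i + j)
  d_mem : ∀ {i : ℤ} {a : M}, a ∈ grading i → d a ∈ grading (i - 1)
  d_sq : ∀ a : M, d (d a) = 0
  one_mul : ∀ a : M, mul one a = a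
  mul_one : ∀ a : M, mul a one = a
  gcomm : ∀ {i j : ℤ} {a b : M}, a ∈ grading i → b ∈ grading j →
    mul a b = sgn (i * j) • mul b a
  odd_sq : ∀ {i : ℤ} {a : M}, Odd i → a ∈ grading i → mul a a = 0
  leibniz : ∀ {i : ℤ} {a : M}, a ∈ grading i → ∀ b : M,
    d (mul a b) = mul (d a) b + sgn i • mul a (d b)

/-- An MDG module over an MDG algebra: unital and graded-commutative, not
necessarily associative.  Both the left and the right `A`-scalar multiplication
are recorded; graded-commutativity ties them together. -/
structure MDGMod (R M X : Type*) [CommRing R] [AddCommGroup M] [Module R M]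
    [AddCommGroup X] [Module R X] (A : MDGAlg R M) where
  grading : ℤ → Submodule R X
  internal : DirectSum.IsInternal grading
  smul : M →ₗ[R] X →ₗ[R] X
  smulR : X →ₗ[R] M →ₗ[R] X
  d : X →ₗ[R] X
  smul_mem : ∀ {i j : ℤ} {a : M} {x : X}, a ∈ A.grading i → x ∈ grading j →
    smul a x ∈ grading (i + j)
  d_mem : ∀ {i : ℤ} {x : X}, x ∈ grading i → d x ∈ grading (i - 1)
  d_sq : ∀ x : X, d (d x) = 0
  one_smul : ∀ x : X, smul A.one x = x
  smul_one : ∀ x : X, smulR x A.one = x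
  gcomm : ∀ {i j : ℤ} {a : M} {x : X}, a ∈ A.grading i → x ∈ grading j →
    smul a x = sgn (i * j) • smulR x a
  leibniz : ∀ {i : ℤ} {a : M}, a ∈ A.grading i → ∀ x : X,
    d (smul a x) = smul (A.d a) x + sgn i • smul a (d x)

section Defs

variable {R M X Y : Type*} [CommRing R] [AddCommGroup M] [Module R M]
  [AddCommGroup X] [Module R X] [AddCommGroup Y] [Module R Y]

/-- The associator `[a,b,c] = (ab)c - a(bc)` of an MDG algebra. -/
def ascA (A : MDGAlg R M) (a b c : M) : M :=
  A.mul (A.mul a b) c - A.mul a (A.mul b c)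

/-- The associator `[a,b,x] = (ab)x - a(bx)` of an MDG module. -/
def ascAAX {A : MDGAlg R M} (Xm : MDGMod R M X A) (a b : M) (x : X) : X :=
  Xm.smul (A.mul a b) x - Xm.smul a (Xm.smul b x)

/-- The associator `[x,a,b] = (xa)b - x(ab)`. -/
def ascXAA {A : MDGAlg R M} (Xm : MDGMod R M X A) (x : X) (a b : M) : X :=
  Xm.smulR (Xm.smulR x a) b - Xm.smulR x (A.mul a b)

/-- The associator `[a,x,b] = (ax)b - a(xb)`. -/
def ascAXA {A : MDGAlg R M} (Xm : MDGMod R M X A) (a : M) (x : X) (b : M) : X :=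
  Xm.smulR (Xm.smul a x) b - Xm.smul a (Xm.smulR x b)

/-- The multiplicator `[a,x]_φ = φ(ax) - aφ(x)` of a chain map `φ : X → Y`. -/
def multc {A : MDGAlg R M} (Xm : MDGMod R M X A) (Ym : MDGMod R M Y A)
    (φ : X →ₗ[R] Y) (a : M) (x : X) : Y :=
  φ (Xm.smul a x) - Ym.smul a (φ x)

/-- The right-sided multiplicator `[x,a]_φ = φ(xa) - φ(x)a`. -/
def multcR {A : MDGAlg R M} (Xm : MDGMod R M X A) (Ym : MDGMod R M Y A)
    (φ : X →ₗ[R] Y) (x : X) (a : M) : Y :=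
  φ (Xm.smulR x a) - Ym.smulR (φ x) a

/-- The associator `A`-submodule `⟨X⟩`: the smallest submodule of `X` containing
all associators and closed under the `A`-action and the differential. -/
def assocSub {A : MDGAlg R M} (Xm : MDGMod R M X A) : Submodule R X :=
  sInf {S : Submodule R X |
    (∀ (a : M) (x : X), x ∈ S → Xm.smul a x ∈ S) ∧
    (∀ x ∈ S, Xm.d x ∈ S) ∧
    ∀ (a b : M) (x : X), ascAAX Xm a b x ∈ S}

/-- The associator ideal `⟨A⟩` of an MDG algebra. -/
def assocIdeal (A : MDGAlg R M) : Submodule R M :=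
  sInf {S : Submodule R M |
    (∀ (a : M) (x : M), x ∈ S → A.mul a x ∈ S) ∧
    (∀ x ∈ S, A.d x ∈ S) ∧
    ∀ a b c : M, ascA A a b c ∈ S}

end Defs

/-! By graded commutativity both `(ax)a` and `a(xa)` are `±a(ax)`, and their signs differ by
`(-1)^{|a|}`. So `[a,x,a]` vanishes for `|a|` even and is `∓2·a(ax)` for `|a|` odd, while for `|a|`
odd `a² = 0` gives `[a,a,x] = -a(ax)`. -/

theorem sgn_add (m n : ℤ) : sgn (m + n) = sgn m * sgn n := by
  simp only [sgn, Int.negOnePow_add, Units.val_mul]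

theorem sgn_mul_sgn_self (n : ℤ) : sgn n * sgn n = 1 := by
  rw [← sgn_add, sgn, Int.negOnePow_even _ ⟨n, rfl⟩, Units.val_one]

theorem sgn_mul_self (n : ℤ) : sgn (n * n) = sgn n := by
  rw [sgn, Int.negOnePow_mul_self, sgn]

theorem sgn_of_even {n : ℤ} (hn : Even n) : sgn n = 1 := by
  rw [sgn, Int.negOnePow_even _ hn, Units.val_one]

theorem sgn_of_odd {n : ℤ} (hn : Odd n) : sgn n = -1 := by
  rw [sgn, Int.negOnePow_odd _ hn, Units.val_neg, Units.val_one]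

theorem isUnit_sgn (n : ℤ) : IsUnit (sgn n) := Units.isUnit _

theorem eq_zero_of_two_zsmul_eq_zero {R X : Type*} [Semiring R] [AddCommGroup X] [Module R X]
    (h2 : IsUnit (2 : R)) {v : X} (hv : (2 : ℤ) • v = 0) : v = 0 := by
  rwa [two_smul ℤ, ← two_smul R, h2.smul_eq_zero] at hv

section Associator

variable {R M X : Type*} [CommRing R] [AddCommGroup M] [Module R M]
  [AddCommGroup X] [Module R X] {A : MDGAlg R M} (Xm : MDGMod R M X A)
  {i j : ℤ} {a : M} {x : X}

theorem MDGMod.smulR_eq_sgn_smul (ha : a ∈ A.grading i) (hx : x ∈ Xm.grading j) :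
    Xm.smulR x a = sgn (i * j) • Xm.smul a x := by
  rw [Xm.gcomm ha hx, smul_smul, sgn_mul_sgn_self, one_zsmul]

theorem ascAXA_self_eq (ha : a ∈ A.grading i) (hx : x ∈ Xm.grading j) :
    ascAXA Xm a x a = sgn (i * j) • (sgn i - 1) • Xm.smul a (Xm.smul a x) := by
  rw [ascAXA, Xm.smulR_eq_sgn_smul ha (Xm.smul_mem ha hx), Xm.smulR_eq_sgn_smul ha hx,
    map_zsmul, mul_add, sgn_add, sgn_mul_self, smul_smul, mul_sub, mul_one, sub_smul,
    mul_comm]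

theorem ascAXA_self_of_even (ha : a ∈ A.grading i) (hx : x ∈ Xm.grading j) (hi : Even i) :
    ascAXA Xm a x a = 0 := by
  rw [ascAXA_self_eq Xm ha hx, sgn_of_even hi, sub_self, zero_smul, smul_zero]

theorem ascAAX_self_of_odd (ha : a ∈ A.grading i) (hi : Odd i) (x : X) :
    ascAAX Xm a a x = -Xm.smul a (Xm.smul a x) := by
  rw [ascAAX, A.odd_sq hi ha, map_zero, LinearMap.zero_apply, zero_sub]

theorem ascAXA_self_of_odd (ha : a ∈ A.grading i) (hx : x ∈ Xm.grading j) (hi : Odd i) :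
    ascAXA Xm a x a = sgn j • (2 : ℤ) • ascAAX Xm a a x := by
  have hij : sgn (i * j) = sgn j := by
    rw [show i * j = (i - 1) * j + j by ring, sgn_add,
      sgn_of_even ((hi.sub_odd odd_one).mul_right j), one_mul]
  rw [ascAXA_self_eq Xm ha hx, hij, sgn_of_odd hi, ascAAX_self_of_odd Xm ha hi]
  module

end Associator

/-- If `|a|` is even then `[a,x,a] = 0`; if `|a|` is odd then
`[a,x,a] = (-1)^{|x|}·2·[a,a,x]`.  In particular `[a,a,x] = 0 → [a,x,a] = 0`,
and the converse holds when `|a|` is odd and `2` is invertible. -/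
theorem stmt6 {R M X : Type*} [CommRing R] [AddCommGroup M] [Module R M]
    [AddCommGroup X] [Module R X] (A : MDGAlg R M) (Xm : MDGMod R M X A)
    {i j : ℤ} {a : M} {x : X}
    (ha : a ∈ A.grading i) (hx : x ∈ Xm.grading j) :
    (Even i → ascAXA Xm a x a = 0) ∧
    (Odd i → ascAXA Xm a x a = sgn j • ((2 : ℤ) • ascAAX Xm a a x)) ∧
    (ascAAX Xm a a x = 0 → ascAXA Xm a x a = 0) ∧
    (Odd i → IsUnit (2 : R) → ascAXA Xm a x a = 0 → ascAAX Xm a a x = 0) := by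
  refine ⟨ascAXA_self_of_even Xm ha hx, ascAXA_self_of_odd Xm ha hx, fun h => ?_,
    fun hi h2 h => ?_⟩
  · rcases Int.even_or_odd i with hi | hi
    · exact ascAXA_self_of_even Xm ha hx hi
    · rw [ascAXA_self_of_odd Xm ha hx hi, h, smul_zero, smul_zero]
  · rw [ascAXA_self_of_odd Xm ha hx hi, (isUnit_sgn j).smul_eq_zero] at h
    exact eq_zero_of_two_zsmul_eq_zero h2 h
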